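/- Let r₁ > 0 and let h be a real-valued function that is C² on the open set {w ∈ ℝ² : |w| > r₁}, satisfying there the sinh-Gordon equation Δh(w) = 2·sinh(2·h(w)) (where Δ = ∂²/∂w₁² + ∂²/∂w₂² is the Euclidean Laplacian), with h(w) > 0 for all |w| > r₁ and h(w) → 0 as |w| → ∞. Then there exist constants A > 0 and r₀ ≥ r₁ such that h(w) ≥ (A/√|w|)·e^{−2|w|} for every w with |w| ≥ r₀. -/

import Mathlib

open Set MeasureTheory
open scoped Topology ENNReal

noncomputable section

/-- The plane ℝ² with the Euclidean inner product. -/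
abbrev E2 := EuclideanSpace ℝ (Fin 2)

/-- The unit circle S¹ ⊂ ℝ². -/
def S1 : Set E2 := Metric.sphere 0 1

/-- The closed unit disk 𝔻̄ ⊂ ℝ². -/
def cDisk : Set E2 := Metric.closedBall 0 1

/-- The essential domain of a function `u : ℝ² → ℝ ∪ {+∞}`. -/
def essDom (u : E2 → EReal) : Set E2 := {x | u x < ⊤}

/-- The domain of support `Ω_u`: the interior of the essential domain. -/
def suppDom (u : E2 → EReal) : Set E2 := interior (essDom u)

/-- The subdifferential of `u` at `x`. -/
def subdiff (u : E2 → EReal) (x : E2) : Set E2 :=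
  {p | ∀ z : E2, u x + ((inner ℝ p (z - x) : ℝ) : EReal) ≤ u z}

/-- The Monge–Ampère measure of `u` on a set `ω`. -/
def MAmeasure (u : E2 → EReal) (ω : Set E2) : ℝ≥0∞ :=
  volume (⋃ x ∈ ω, subdiff u x)

/-- `u` is gradient-surjective: the subdifferentials over Ω_u cover ℝ². -/
def GradientSurjective (u : E2 → EReal) : Prop :=
  ⋃ x ∈ suppDom u, subdiff u x = univ

/-- The convex envelope: pointwise sup of affine minorants. -/
def convEnv (φ : E2 → EReal) (x : E2) : EReal :=
  ⨆ ℓ ∈ {ℓ : E2 →ᵃ[ℝ] ℝ | ∀ y, (ℓ y : EReal) ≤ φ y}, ((ℓ x : ℝ) : EReal)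

/-- Ω_φ: the interior of the convex hull of the finiteness set of φ on S¹. -/
def OmegaPhi (φ : E2 → EReal) : Set E2 :=
  interior (convexHull ℝ {ξ ∈ S1 | φ ξ < ⊤})

/-- Convexity of an ℝ ∪ {+∞}-valued function, via convexity of the epigraph. -/
def IsConvexEReal (u : E2 → EReal) : Prop :=
  Convex ℝ {p : E2 × ℝ | u p.1 ≤ (p.2 : EReal)}

/-- Proper closed convex function with values in ℝ ∪ {+∞}. -/
def IsClosedProperConvex (u : E2 → EReal) : Prop :=
  (∃ x, u x ≠ ⊤) ∧ (∀ x, u x ≠ ⊥) ∧ LowerSemicontinuous u ∧ IsConvexEReal u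

/-- The Hessian determinant det D²f of a real function on ℝ². -/
def hessDet (f : E2 → ℝ) (z : E2) : ℝ :=
  Matrix.det (Matrix.of fun i j : Fin 2 =>
    fderiv ℝ (fun w => fderiv ℝ f w (EuclideanSpace.single i 1)) z (EuclideanSpace.single j 1))

/-- φ is admissible boundary data: φ : S¹ → ℝ ∪ {+∞} (extended by +∞ off S¹),
lower semicontinuous and finite at at least three distinct points. -/
def IsAdmissiblePhi (φ : E2 → EReal) : Prop :=
  (∀ x, x ∉ S1 → φ x = ⊤) ∧ (∀ x, φ x ≠ ⊥) ∧ LowerSemicontinuous φ ∧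
  ∃ ξ₁ ∈ S1, ∃ ξ₂ ∈ S1, ∃ ξ₃ ∈ S1,
    ξ₁ ≠ ξ₂ ∧ ξ₁ ≠ ξ₃ ∧ ξ₂ ≠ ξ₃ ∧ φ ξ₁ ≠ ⊤ ∧ φ ξ₂ ≠ ⊤ ∧ φ ξ₃ ≠ ⊤

/-- A solution of the Minkowski problem with data (φ, ψ). -/
def IsMinkowskiSolution (φ : E2 → EReal) (ψ : E2 → ℝ) (u : E2 → EReal) : Prop :=
  IsClosedProperConvex u ∧
  (∀ z, z ∉ OmegaPhi φ → u z = convEnv φ z) ∧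
  (∀ z ∈ OmegaPhi φ, u z ≠ ⊤) ∧
  ContDiffOn ℝ 2 (fun z => (u z).toReal) (OmegaPhi φ) ∧
  ∀ z ∈ OmegaPhi φ, hessDet (fun w => (u w).toReal) z
    = (1 / ψ z) * ((1 - ‖z‖ ^ 2) ^ 2)⁻¹


/-- The Euclidean Laplacian Δh = ∂²h/∂w₁² + ∂²h/∂w₂² of a function on ℝ². -/
def laplacian2 (h : E2 → ℝ) (w : E2) : ℝ :=
  fderiv ℝ (fun v => fderiv ℝ h v (EuclideanSpace.single 0 1)) w (EuclideanSpace.single 0 1)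
  + fderiv ℝ (fun v => fderiv ℝ h v (EuclideanSpace.single 1 1)) w (EuclideanSpace.single 1 1)

/-!
The radial function `V(w) = A e^{-2|w|} / √|w|` is a strict subsolution wherever it is small:
`ΔV = (4 + 1/(4|w|²)) V`, whereas `2 sinh (2V) ≤ 4V + (32/9) V³` and `V ≤ 1/(4|w|)` for `|w| ≥ 1`.
Choose `A` so that `V ≤ h` on the circle `|w| = r₀`. If `V - h` were positive somewhere beyond it,
then, because `V → 0` while `h > 0`, it would have a positive interior maximum on an annulus, and
there `ΔV ≤ Δh = 2 sinh (2h) < 2 sinh (2V)`, a contradiction.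
-/

open Real

theorem IsLocalMax.hasDerivAt_hasDerivAt_nonpos {g g' : ℝ → ℝ} {x c : ℝ} (hmax : IsLocalMax g x)
    (hg : ∀ᶠ t in 𝓝 x, HasDerivAt g (g' t) t) (hg' : HasDerivAt g' c x) : c ≤ 0 := by
  by_contra! hc
  have hx : g' x = 0 := hmax.hasDerivAt_eq_zero hg.self_of_nhds
  have hpos : ∀ᶠ t in 𝓝[>] x, 0 < g' t := by
    have hslope := (hasDerivAt_iff_tendsto_slope.mp hg').mono_left
      (nhdsWithin_mono x fun t (ht : x < t) => ht.ne')
    filter_upwards [hslope.eventually (eventually_gt_nhds hc), self_mem_nhdsWithin]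
      with t hst (hxt : x < t)
    rw [slope_def_field, hx, sub_zero] at hst
    exact (div_pos_iff_of_pos_right (sub_pos.2 hxt)).1 hst
  obtain ⟨b, hxb, hb⟩ := mem_nhdsGT_iff_exists_Ioc_subset.1
    (hpos.and (nhdsWithin_le_nhds (hg.and hmax)))
  have hderiv : ∀ t ∈ Icc x b, HasDerivAt g (g' t) t := fun t ht =>
    ht.1.eq_or_lt.elim (fun hxt => hxt ▸ hg.self_of_nhds) fun hxt => (hb ⟨hxt, ht.2⟩).2.1
  obtain ⟨ξ, hξ, hξslope⟩ := exists_hasDerivAt_eq_slope g g' (mem_Ioi.1 hxb)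
    (fun t ht => (hderiv t ht).continuousAt.continuousWithinAt)
    (fun t ht => hderiv t (Ioo_subset_Icc_self ht))
  have hgb : g b ≤ g x := (hb ⟨hxb, le_rfl⟩).2.2
  have : 0 < (g b - g x) / (b - x) := hξslope ▸ (hb ⟨hξ.1, hξ.2.le⟩).1
  exact (div_pos_iff_of_pos_right (sub_pos.2 (mem_Ioi.1 hxb))).1 this |>.not_ge (sub_nonpos.2 hgb)

theorem exists_isLocalMax_of_lt_on_spheres {E : Type*} [SeminormedAddCommGroup E] [ProperSpace E]
    {u : E → ℝ} {a b : ℝ} {w : E} (hu : ContinuousOn u {v | a ≤ ‖v‖ ∧ ‖v‖ ≤ b})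
    (hwa : a ≤ ‖w‖) (hwb : ‖w‖ ≤ b) (ha : ∀ v, ‖v‖ = a → u v < u w)
    (hb : ∀ v, ‖v‖ = b → u v < u w) :
    ∃ z, a < ‖z‖ ∧ ‖z‖ < b ∧ u w ≤ u z ∧ IsLocalMax u z := by
  have hK : IsCompact {v : E | a ≤ ‖v‖ ∧ ‖v‖ ≤ b} :=
    (isCompact_closedBall 0 b).of_isClosed_subset
      ((isClosed_le continuous_const continuous_norm).inter
        (isClosed_le continuous_norm continuous_const))
      fun v hv => mem_closedBall_zero_iff.2 hv.2
  obtain ⟨z, hzK, hzmax⟩ := hK.exists_isMaxOn ⟨w, hwa, hwb⟩ hu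
  have hwz : u w ≤ u z := hzmax ⟨hwa, hwb⟩
  have hza : a < ‖z‖ := hzK.1.lt_of_ne fun h => (ha z h.symm).not_ge hwz
  have hzb : ‖z‖ < b := hzK.2.lt_of_ne fun h => (hb z h).not_ge hwz
  have hO : IsOpen {v : E | a < ‖v‖ ∧ ‖v‖ < b} :=
    (isOpen_lt continuous_const continuous_norm).inter (isOpen_lt continuous_norm continuous_const)
  exact ⟨z, hza, hzb, hwz, hzmax.isLocalMax <|
    Filter.mem_of_superset (hO.mem_nhds ⟨hza, hzb⟩) fun v hv => ⟨hv.1.le, hv.2.le⟩⟩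

section Radial

variable {E : Type*} [NormedAddCommGroup E] [InnerProductSpace ℝ E]

theorem hasDerivAt_add_smul (z e : E) (t : ℝ) : HasDerivAt (fun t : ℝ => z + t • e) e t := by
  simpa using ((hasDerivAt_id t).smul_const e).const_add z

theorem hasDerivAt_norm_add_smul_sq (z e : E) (t : ℝ) :
    HasDerivAt (fun t : ℝ => ‖z + t • e‖ ^ 2) (2 * inner ℝ z e + 2 * t * ‖e‖ ^ 2) t := by
  convert (hasDerivAt_add_smul z e t).norm_sq using 1
  rw [inner_add_left, real_inner_smul_left, real_inner_self_eq_norm_sq]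
  ring

theorem ContDiffAt.eventually_hasDerivAt_add_smul {h : E → ℝ} {z : E} (hh : ContDiffAt ℝ 2 h z)
    (e : E) :
    ∀ᶠ t in 𝓝 (0 : ℝ), HasDerivAt (fun t : ℝ => h (z + t • e)) (fderiv ℝ h (z + t • e) e) t := by
  have hz : z + (0 : ℝ) • e = z := by simp
  filter_upwards [(hasDerivAt_add_smul z e 0).continuousAt.eventually
    (hz ▸ hh.eventually (by simp))] with t ht
  exact (ht.differentiableAt two_ne_zero).hasFDerivAt.comp_hasDerivAt t (hasDerivAt_add_smul z e t)

theorem ContDiffAt.hasDerivAt_fderiv_add_smul {h : E → ℝ} {z : E} (hh : ContDiffAt ℝ 2 h z)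
    (e : E) :
    HasDerivAt (fun t : ℝ => fderiv ℝ h (z + t • e) e)
      (fderiv ℝ (fun v => fderiv ℝ h v e) z e) 0 := by
  have hd : DifferentiableAt ℝ (fun v => fderiv ℝ h v e) z :=
    ((hh.fderiv_right (m := 1) (by norm_num)).differentiableAt one_ne_zero).clm_apply
      (differentiableAt_const e)
  exact hd.hasFDerivAt.comp_hasDerivAt_of_eq 0 (hasDerivAt_add_smul z e 0) (by simp)

theorem IsLocalMax.radial_secondDeriv_le {F F' : ℝ → ℝ} {F'' : ℝ} {h : E → ℝ} {z : E}
    (hmax : IsLocalMax (fun v => F (‖v‖ ^ 2) - h v) z)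
    (hF : ∀ᶠ s in 𝓝 (‖z‖ ^ 2), HasDerivAt F (F' s) s) (hF' : HasDerivAt F' F'' (‖z‖ ^ 2))
    (hh : ContDiffAt ℝ 2 h z) (e : E) :
    F'' * (2 * inner ℝ z e) ^ 2 + 2 * F' (‖z‖ ^ 2) * ‖e‖ ^ 2 ≤
      fderiv ℝ (fun v => fderiv ℝ h v e) z e := by
  set q : ℝ → ℝ := fun t => ‖z + t • e‖ ^ 2
  have hq : ∀ t, HasDerivAt q (2 * inner ℝ z e + 2 * t * ‖e‖ ^ 2) t :=
    hasDerivAt_norm_add_smul_sq z e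
  have hq0 : q 0 = ‖z‖ ^ 2 := by simp [q]
  have hline : IsLocalMax (fun t => F (q t) - h (z + t • e)) 0 := by
    have hmax' : IsLocalMax (fun v => F (‖v‖ ^ 2) - h v) (z + (0 : ℝ) • e) := by simpa using hmax
    exact IsLocalMax.comp_continuous (g := fun t : ℝ => z + t • e) hmax'
      (hasDerivAt_add_smul z e 0).continuousAt
  have hFq : ∀ᶠ t in 𝓝 0, HasDerivAt F (F' (q t)) (q t) :=
    (hq 0).continuousAt.eventually (hq0 ▸ hF)
  have hlin : HasDerivAt (fun t => 2 * inner ℝ z e + 2 * t * ‖e‖ ^ 2) (2 * ‖e‖ ^ 2) 0 := by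
    simpa using (((hasDerivAt_id (0 : ℝ)).const_mul 2).mul_const (‖e‖ ^ 2)).const_add
      (2 * inner ℝ z e)
  have key := hline.hasDerivAt_hasDerivAt_nonpos
    (g' := fun t => F' (q t) * (2 * inner ℝ z e + 2 * t * ‖e‖ ^ 2) - fderiv ℝ h (z + t • e) e)
    (by filter_upwards [hFq, hh.eventually_hasDerivAt_add_smul e] with t hFt hht
        exact (hFt.comp t (hq t)).sub hht)
    ((((hq0 ▸ hF').comp 0 (hq 0)).mul hlin).sub (hh.hasDerivAt_fderiv_add_smul e))
  simp only [Function.comp_apply, hq0, mul_zero, zero_mul, add_zero] at key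
  linarith

end Radial

theorem IsLocalMax.radial_laplacian2_le {F F' : ℝ → ℝ} {F'' : ℝ} {h : E2 → ℝ} {z : E2}
    (hmax : IsLocalMax (fun v => F (‖v‖ ^ 2) - h v) z)
    (hF : ∀ᶠ s in 𝓝 (‖z‖ ^ 2), HasDerivAt F (F' s) s) (hF' : HasDerivAt F' F'' (‖z‖ ^ 2))
    (hh : ContDiffAt ℝ 2 h z) :
    4 * ‖z‖ ^ 2 * F'' + 4 * F' (‖z‖ ^ 2) ≤ laplacian2 h z := by
  have h₀ := hmax.radial_secondDeriv_le hF hF' hh (EuclideanSpace.single 0 1)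
  have h₁ := hmax.radial_secondDeriv_le hF hF' hh (EuclideanSpace.single 1 1)
  have hz : ‖z‖ ^ 2 = z 0 ^ 2 + z 1 ^ 2 := by
    simp [EuclideanSpace.norm_sq_eq, Fin.sum_univ_two]
  simp only [EuclideanSpace.inner_single_right, PiLp.norm_single, norm_one, RCLike.conj_to_real,
    one_mul, one_pow, mul_one] at h₀ h₁
  rw [laplacian2]
  linear_combination h₀ + h₁ + 4 * F'' * hz

-- `barrier A (‖w‖ ^ 2) = A e^{-2‖w‖} / √‖w‖`; the variable `s = ‖w‖ ^ 2` is smooth along lines.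
def barrier (A s : ℝ) : ℝ := A / √√s * exp (-2 * √s)

def barrierDeriv (A s : ℝ) : ℝ := -barrier A s * (4 * √s + 1) / (4 * s)

def barrierDeriv2 (A s : ℝ) : ℝ := barrier A s * (16 * s + 16 * √s + 5) / (16 * s ^ 2)

theorem barrier_sq (A : ℝ) {r : ℝ} (hr : 0 ≤ r) : barrier A (r ^ 2) = A / √r * exp (-2 * r) := by
  rw [barrier, sqrt_sq hr]

theorem barrier_eq_mul (A s : ℝ) : barrier A s = A * barrier 1 s := by
  simp only [barrier]
  ring

theorem barrier_pos {A s : ℝ} (hA : 0 < A) (hs : 0 < s) : 0 < barrier A s := by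
  have : 0 < √√s := sqrt_pos.2 (sqrt_pos.2 hs)
  unfold barrier
  positivity

theorem hasDerivAt_barrier (A : ℝ) {s : ℝ} (hs : 0 < s) :
    HasDerivAt (barrier A) (barrierDeriv A s) s := by
  have hq : 0 < √s := sqrt_pos.2 hs
  have hp : 0 < √√s := sqrt_pos.2 hq
  have hsqrt : HasDerivAt sqrt (1 / (2 * √s)) s := hasDerivAt_sqrt hs.ne'
  have h := ((hasDerivAt_const s A).div ((hasDerivAt_sqrt hq.ne').comp s hsqrt) hp.ne').mul
    (hsqrt.const_mul (-2)).exp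
  refine h.congr_deriv ?_
  have hq2 : √s ^ 2 = s := sq_sqrt hs.le
  have hp2 : √√s ^ 2 = √s := sq_sqrt hq.le
  simp only [Pi.div_apply, Function.comp_apply]
  rw [barrierDeriv, barrier]
  generalize √√s = p at *
  generalize √s = q at *
  subst hq2 hp2
  field_simp
  ring

theorem hasDerivAt_barrierDeriv (A : ℝ) {s : ℝ} (hs : 0 < s) :
    HasDerivAt (barrierDeriv A) (barrierDeriv2 A s) s := by
  have hq : 0 < √s := sqrt_pos.2 hs
  have hsqrt : HasDerivAt sqrt (1 / (2 * √s)) s := hasDerivAt_sqrt hs.ne'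
  have h := (((hasDerivAt_barrier A hs).neg.mul ((hsqrt.const_mul 4).add_const 1)).div
    ((hasDerivAt_id s).const_mul 4) (by positivity))
  refine h.congr_deriv ?_
  have hq2 : √s ^ 2 = s := sq_sqrt hs.le
  simp only [Pi.mul_apply, Pi.neg_apply, id]
  rw [barrierDeriv2, barrierDeriv]
  generalize barrier A s = b
  generalize √s = q at *
  subst hq2
  field_simp
  ring

theorem barrier_ode (A : ℝ) {s : ℝ} (hs : 0 < s) :
    4 * s * barrierDeriv2 A s + 4 * barrierDeriv A s = barrier A s * (4 + 1 / (4 * s)) := by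
  rw [barrierDeriv2, barrierDeriv]
  field_simp
  ring

theorem four_mul_le_exp_two_mul {r : ℝ} (hr : 0 ≤ r) : 4 * r ≤ exp (2 * r) :=
  calc 4 * r ≤ (r + 1) ^ 2 := by nlinarith [sq_nonneg (r - 1)]
    _ ≤ exp r ^ 2 := pow_le_pow_left₀ (by linarith) (add_one_le_exp r) 2
    _ = exp (2 * r) := by rw [← exp_nat_mul]; norm_num

theorem four_mul_barrier_sq_le {A r : ℝ} (hA : A ≤ 1) (hr : 1 ≤ r) :
    4 * r * barrier A (r ^ 2) ≤ 1 := by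
  have hsqrt : 1 ≤ √r := one_le_sqrt.2 hr
  have hexp : 4 * r * exp (-2 * r) ≤ 1 := by
    rw [neg_mul, exp_neg, ← div_eq_mul_inv, div_le_one (exp_pos _)]
    exact four_mul_le_exp_two_mul (by linarith)
  have hA' : A / √r ≤ 1 := (div_le_one (by linarith)).2 (hA.trans hsqrt)
  rw [barrier_sq A (by linarith)]
  calc 4 * r * (A / √r * exp (-2 * r)) = A / √r * (4 * r * exp (-2 * r)) := by ring
    _ ≤ 1 * 1 := by gcongr
    _ = 1 := one_mul 1

theorem sinh_le_self_add_cube {x : ℝ} (hx₀ : 0 ≤ x) (hx₁ : x ≤ 1) :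
    sinh x ≤ x + 2 / 9 * x ^ 3 := by
  have taylor (y : ℝ) (hy : |y| ≤ 1) : |exp y - (1 + y + y ^ 2 / 2)| ≤ 2 / 9 * |y| ^ 3 := by
    convert Real.exp_bound hy (n := 3) (by norm_num) using 1
    · norm_num [Finset.sum_range_succ, Nat.factorial]
    · norm_num [Nat.factorial]
      ring
  have hx : |x| = x := abs_of_nonneg hx₀
  have h₁ := (abs_le.1 (taylor x (hx.le.trans hx₁))).2
  have h₂ := (abs_le.1 (taylor (-x) (by rwa [abs_neg, hx]))).1
  rw [abs_neg, hx] at h₂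
  rw [hx] at h₁
  rw [sinh_eq]
  linarith

theorem two_mul_sinh_two_mul_lt {x r : ℝ} (hr : 1 ≤ r) (hx : 0 < x) (hxr : 4 * r * x ≤ 1) :
    2 * sinh (2 * x) < x * (4 + 1 / (4 * r ^ 2)) := by
  have hsinh := sinh_le_self_add_cube (x := 2 * x) (by linarith) (by nlinarith)
  have hcube : 16 * r ^ 2 * x ^ 3 ≤ x :=
    calc 16 * r ^ 2 * x ^ 3 = x * (4 * r * x) ^ 2 := by ring
      _ ≤ x * 1 := by gcongr; exact pow_le_one₀ (by positivity) hxr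
      _ = x := mul_one x
  have hcorr : 32 / 9 * x ^ 3 < x / (4 * r ^ 2) := by
    rw [lt_div_iff₀ (by positivity)]
    linarith
  calc 2 * sinh (2 * x) ≤ 4 * x + 32 / 9 * x ^ 3 := by linarith
    _ < 4 * x + x / (4 * r ^ 2) := by linarith
    _ = x * (4 + 1 / (4 * r ^ 2)) := by ring

theorem not_isLocalMax_barrier_sub {A : ℝ} (hA₀ : 0 < A) (hA : A ≤ 1) {h : E2 → ℝ} {z : E2}
    (hz : 1 ≤ ‖z‖) (hh : ContDiffAt ℝ 2 h z) (heq : laplacian2 h z = 2 * sinh (2 * h z))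
    (hlt : h z < barrier A (‖z‖ ^ 2)) :
    ¬IsLocalMax (fun v => barrier A (‖v‖ ^ 2) - h v) z := by
  intro hmax
  have hs : 0 < ‖z‖ ^ 2 := by positivity
  have hΔ := hmax.radial_laplacian2_le
    (by filter_upwards [eventually_gt_nhds hs] with s hs using hasDerivAt_barrier A hs)
    (hasDerivAt_barrierDeriv A hs) hh
  rw [barrier_ode A hs, heq] at hΔ
  have hsinh : sinh (2 * h z) < sinh (2 * barrier A (‖z‖ ^ 2)) := sinh_lt_sinh.2 (by linarith)
  have := two_mul_sinh_two_mul_lt hz (barrier_pos hA₀ hs) (four_mul_barrier_sq_le hA hz)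
  linarith

theorem barrier_le_of_le_on_sphere {A r₀ : ℝ} (hA : 0 < A) (hA₁ : A ≤ 1) (hr₀ : 1 ≤ r₀)
    {h : E2 → ℝ} (hreg : ∀ v : E2, r₀ ≤ ‖v‖ → ContDiffAt ℝ 2 h v)
    (heq : ∀ v : E2, r₀ ≤ ‖v‖ → laplacian2 h v = 2 * sinh (2 * h v))
    (hpos : ∀ v : E2, r₀ ≤ ‖v‖ → 0 < h v)
    (hsphere : ∀ v : E2, ‖v‖ = r₀ → barrier A (r₀ ^ 2) ≤ h v)
    {w : E2} (hw : r₀ ≤ ‖w‖) : barrier A (‖w‖ ^ 2) ≤ h w := by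
  by_contra! hlt
  set u : E2 → ℝ := fun v => barrier A (‖v‖ ^ 2) - h v
  have hu : 0 < u w := sub_pos.2 hlt
  set R := max (‖w‖ + 1) (1 / u w)
  have hRw : ‖w‖ + 1 ≤ R := le_max_left _ _
  have hu_cont : ContinuousOn u {v | r₀ ≤ ‖v‖ ∧ ‖v‖ ≤ R} := fun v hv =>
    ((ContinuousAt.comp (f := fun v : E2 => ‖v‖ ^ 2)
      (hasDerivAt_barrier A (pow_pos (by linarith [hv.1]) 2)).continuousAt (by fun_prop)).sub
      (hreg v hv.1).continuousAt).continuousWithinAt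
  have hinner (v : E2) (hv : ‖v‖ = r₀) : u v < u w := by
    have := hsphere v hv
    show barrier A (‖v‖ ^ 2) - h v < u w
    rw [hv]
    linarith
  have houter (v : E2) (hv : ‖v‖ = R) : u v < u w := by
    have hRu : 1 ≤ R * u w := (div_le_iff₀ hu).1 (le_max_right _ _)
    have hbR := four_mul_barrier_sq_le hA₁ (by linarith : 1 ≤ R)
    have hbu : 4 * barrier A (R ^ 2) ≤ u w :=
      le_of_mul_le_mul_left (by linarith) (by linarith : 0 < R)
    have := hpos v (by linarith)
    show barrier A (‖v‖ ^ 2) - h v < u w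
    rw [hv]
    linarith
  obtain ⟨z, hz, -, hwz, hzmax⟩ :=
    exists_isLocalMax_of_lt_on_spheres hu_cont hw (by linarith) hinner houter
  exact not_isLocalMax_barrier_sub hA hA₁ (by linarith) (hreg z hz.le) (heq z hz.le)
    (by linarith) hzmax

theorem sinhGordon_lower_bound_general
    (r₁ : ℝ) (h : E2 → ℝ)
    (hreg : ContDiffOn ℝ 2 h {w : E2 | r₁ < ‖w‖})
    (heq : ∀ w : E2, r₁ < ‖w‖ → laplacian2 h w = 2 * Real.sinh (2 * h w))
    (hpos : ∀ w : E2, r₁ < ‖w‖ → 0 < h w) :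
    ∃ A > 0, ∃ r₀ ≥ r₁, ∀ w : E2, r₀ ≤ ‖w‖ →
      (A / Real.sqrt ‖w‖) * Real.exp (-2 * ‖w‖) ≤ h w := by
  have hU : IsOpen {w : E2 | r₁ < ‖w‖} := isOpen_lt continuous_const continuous_norm
  set r₀ := max r₁ 1 + 1
  have hr₀U (v : E2) (hv : r₀ ≤ ‖v‖) : r₁ < ‖v‖ := by grind
  obtain ⟨w₀, hw₀, hmin⟩ := (isCompact_sphere (0 : E2) r₀).exists_isMinOn
    (NormedSpace.sphere_nonempty.2 (by grind))
    (hreg.continuousOn.mono fun v hv => hr₀U v (mem_sphere_zero_iff_norm.1 hv).ge)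
  have hm₀ : 0 < h w₀ := hpos w₀ (hr₀U w₀ (mem_sphere_zero_iff_norm.1 hw₀).ge)
  have hb₀ : 0 < barrier 1 (r₀ ^ 2) := barrier_pos one_pos (by positivity)
  set A := min 1 (h w₀ / barrier 1 (r₀ ^ 2))
  have hA : 0 < A := lt_min one_pos (div_pos hm₀ hb₀)
  have hAr₀ : barrier A (r₀ ^ 2) ≤ h w₀ := by
    rw [barrier_eq_mul, ← le_div_iff₀ hb₀]
    exact min_le_right _ _
  refine ⟨A, hA, r₀, by grind, fun w hw => ?_⟩
  rw [← barrier_sq A (norm_nonneg w)]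
  exact barrier_le_of_le_on_sphere hA (min_le_left _ _) (by grind)
    (fun v hv => hreg.contDiffAt (hU.mem_nhds (hr₀U v hv))) (fun v hv => heq v (hr₀U v hv))
    (fun v hv => hpos v (hr₀U v hv)) (fun v hv => hAr₀.trans (hmin (mem_sphere_zero_iff_norm.2 hv)))
    hw

/-- a positive solution of the sinh-Gordon equation Δh = 2 sinh(2h)
outside a disk which tends to 0 at infinity obeys the lower bound
h(w) ≥ (A/√|w|) e^{-2|w|} for large |w|. -/
theorem sinhGordon_lower_bound
    (r₁ : ℝ) (hr₁ : 0 < r₁) (h : E2 → ℝ)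
    (hreg : ContDiffOn ℝ 2 h {w : E2 | r₁ < ‖w‖})
    (heq : ∀ w : E2, r₁ < ‖w‖ → laplacian2 h w = 2 * Real.sinh (2 * h w))
    (hpos : ∀ w : E2, r₁ < ‖w‖ → 0 < h w)
    (hlim : Filter.Tendsto h (Filter.comap norm Filter.atTop) (nhds 0)) :
    ∃ A > 0, ∃ r₀ ≥ r₁, ∀ w : E2, r₀ ≤ ‖w‖ →
      (A / Real.sqrt ‖w‖) * Real.exp (-2 * ‖w‖) ≤ h w :=
  sinhGordon_lower_bound_general r₁ h hreg heq hpos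

end
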